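/- (Lemma 1, arbitrary controller based approach.) Let F : ℝ^{n_x} × ℝ^{n_u} → ℝ^{n_x} be twice continuously differentiable with F(0,0) = 0, let U ⊆ ℝ^{n_u} contain the origin in its interior, and let W_x, ΔQ be symmetric positive definite n_x×n_x matrices and W_u a symmetric positive definite n_u×n_u matrix. Let L be a real n_u×n_x matrix, set Φ := ∂F/∂x(0,0), Γ := ∂F/∂u(0,0), Φ_L := Φ − Γ L, and suppose P is a symmetric positive definite n_x×n_x matrix solving the modified Lyapunov equation Φ_Lᵀ P Φ_L − P = −(W_x + Lᵀ W_u L + ΔQ). Then there exists a constant α > 0 such that, with Ω := {x ∈ ℝ^{n_x} : xᵀ P x ≤ α}: (i) −L x ∈ U for every x ∈ Ω; (ii) F(x, −L x) ∈ Ω for every x ∈ Ω, so Ω is an invariant set for the closed-loop system x(k+1) = F(x(k), −L x(k)); and (iii) for every trajectory of this closed-loop system with x(0) ∈ Ω, the series Σ_{k=0}^{∞} ( x(k)ᵀ W_x x(k) + (L x(k))ᵀ W_u (L x(k)) ) converges with sum at most x(0)ᵀ P x(0). -/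

import Mathlib

/-!
Write `V x = xᵀ P x` and `g x = F (x, -L x)`. Since `g` has derivative `Φ_L` at the origin,
`V (g x) - V (Φ_L x) = o(‖x‖²)`, while the Lyapunov equation gives
`V (Φ_L x) = V x - ℓ x - xᵀ ΔQ x` with `ℓ` the stage cost. The margin `xᵀ ΔQ x ≥ c ‖x‖²`
absorbs the remainder near the origin, so `V (g x) + ℓ x ≤ V x` there. A sublevel set of `V`
small enough to lie in that neighbourhood and in the preimage of `U` under `x ↦ -L x` is then
invariant, and along a trajectory the stage costs telescope to at most `V (x 0)`.
-/

open Matrix Filter Topology Asymptotics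

namespace Matrix

variable {n : Type*} [Fintype n]

theorem dotProduct_mulVec_self_sub_self {R : Type*} [CommRing R] (M : Matrix n n R)
    (a b : n → R) :
    a ⬝ᵥ (M *ᵥ a) - b ⬝ᵥ (M *ᵥ b) = (a - b) ⬝ᵥ (M *ᵥ a) + b ⬝ᵥ (M *ᵥ (a - b)) := by
  simp only [sub_dotProduct, mulVec_sub, dotProduct_sub]
  ring

theorem dotProduct_transpose_mul_mul_mulVec {m R : Type*} [Fintype m] [CommSemiring R]
    (B : Matrix m n R) (M : Matrix m m R) (x : n → R) :
    x ⬝ᵥ ((Bᵀ * M * B) *ᵥ x) = (B *ᵥ x) ⬝ᵥ (M *ᵥ (B *ᵥ x)) := by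
  rw [← mulVec_mulVec, ← mulVec_mulVec, dotProduct_transpose_mulVec, dotProduct_comm]

theorem isBoundedBilinearMap_dotProduct_mulVec {m : Type*} [Fintype m] (M : Matrix m n ℝ) :
    IsBoundedBilinearMap ℝ fun p : (m → ℝ) × (n → ℝ) => p.1 ⬝ᵥ (M *ᵥ p.2) := by
  classical
  let toCLM : ((n → ℝ) →ₗ[ℝ] ℝ) ≃ₗ[ℝ] ((n → ℝ) →L[ℝ] ℝ) := LinearMap.toContinuousLinearMap
  let B : (m → ℝ) →L[ℝ] (n → ℝ) →L[ℝ] ℝ :=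
    LinearMap.toContinuousLinearMap (toCLM.toLinearMap ∘ₗ toLinearMap₂' ℝ M)
  have hB : ∀ p : (m → ℝ) × (n → ℝ), B p.1 p.2 = p.1 ⬝ᵥ (M *ᵥ p.2) :=
    fun p => toLinearMap₂'_apply' M p.1 p.2
  simpa only [hB] using B.isBoundedBilinearMap

theorem PosSemidef.dotProduct_mulVec_self_nonneg {Q : Matrix n n ℝ} (hQ : Q.PosSemidef)
    (x : n → ℝ) : 0 ≤ x ⬝ᵥ (Q *ᵥ x) := by
  simpa using hQ.dotProduct_mulVec_nonneg x

theorem PosDef.exists_pos_mul_norm_sq_le {Q : Matrix n n ℝ} (hQ : Q.PosDef) :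
    ∃ c > 0, ∀ x : n → ℝ, c * ‖x‖ ^ 2 ≤ x ⬝ᵥ (Q *ᵥ x) := by
  obtain ⟨c, hc, hc_le⟩ := (isCompact_sphere (0 : n → ℝ) 1).exists_forall_le'
    (f := fun x => x ⬝ᵥ (Q *ᵥ x)) (a := 0) (by fun_prop) fun x hx => by
      simpa using hQ.dotProduct_mulVec_pos (ne_zero_of_mem_unit_sphere ⟨x, hx⟩)
  refine ⟨c, hc, fun x => ?_⟩
  rcases eq_or_ne x 0 with rfl | hx
  · simp
  have hnx : 0 < ‖x‖ := norm_pos_iff.mpr hx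
  have h := hc_le (‖x‖⁻¹ • x) (by simp [norm_smul, hnx.ne'])
  simp only [mulVec_smul, dotProduct_smul, smul_dotProduct, smul_eq_mul] at h
  calc c * ‖x‖ ^ 2 ≤ ‖x‖⁻¹ * (‖x‖⁻¹ * x ⬝ᵥ (Q *ᵥ x)) * ‖x‖ ^ 2 := by gcongr
    _ = x ⬝ᵥ (Q *ᵥ x) := by field_simp

theorem PosDef.exists_sublevel_subset {P : Matrix n n ℝ} (hP : P.PosDef) {N : Set (n → ℝ)}
    (hN : N ∈ 𝓝 0) : ∃ α > 0, ∀ x, x ⬝ᵥ (P *ᵥ x) ≤ α → x ∈ N := by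
  obtain ⟨δ, hδ, hball⟩ := Metric.mem_nhds_iff.mp hN
  obtain ⟨c, hc, hc_le⟩ := hP.exists_pos_mul_norm_sq_le
  refine ⟨c * δ ^ 2 / 2, by positivity, fun x hx => hball ?_⟩
  have : ‖x‖ ^ 2 < δ ^ 2 := by nlinarith [hc_le x, mul_pos hc (pow_pos hδ 2)]
  exact mem_ball_zero_iff.mpr (lt_of_pow_lt_pow_left₀ 2 hδ.le this)

end Matrix

theorem hasFDerivAt_feedback_zero {m n : Type*} [Fintype m] [Fintype n]
    {F : (n → ℝ) × (m → ℝ) → n → ℝ} {Φ : Matrix n n ℝ} {Γ : Matrix n m ℝ} (L : Matrix m n ℝ)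
    (hF : DifferentiableAt ℝ F (0, 0))
    (hΦΓ : ∀ p, fderiv ℝ F (0, 0) p = Φ *ᵥ p.1 + Γ *ᵥ p.2) :
    HasFDerivAt (fun x => F (x, -(L *ᵥ x)))
      (LinearMap.toContinuousLinearMap (Φ - Γ * L).mulVecLin) 0 := by
  let j : (n → ℝ) →L[ℝ] (n → ℝ) × (m → ℝ) :=
    (ContinuousLinearMap.id ℝ _).prod (-LinearMap.toContinuousLinearMap L.mulVecLin)
  have hj0 : j 0 = (0, 0) := by simp [j]
  have hFj := (hj0 ▸ hF.hasFDerivAt).comp 0 j.hasFDerivAt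
  have hderiv :
      (fderiv ℝ F (j 0)).comp j = LinearMap.toContinuousLinearMap (Φ - Γ * L).mulVecLin := by
    ext1 x
    simp [j, hj0, hΦΓ, mulVec_neg, sub_eq_add_neg, -mulVec_mulVec]
  exact hderiv ▸ hFj

theorem eventually_dotProduct_mulVec_map_add_le {n : Type*} [Fintype n]
    {g : (n → ℝ) → n → ℝ} {A P R ΔQ : Matrix n n ℝ}
    (hg : HasFDerivAt g (LinearMap.toContinuousLinearMap A.mulVecLin) 0)
    (hg0 : g 0 = 0) (hΔQ : ΔQ.PosDef) (hLyap : Aᵀ * P * A - P = -(R + ΔQ)) :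
    ∀ᶠ x in 𝓝 0, g x ⬝ᵥ (P *ᵥ g x) + x ⬝ᵥ (R *ᵥ x) ≤ x ⬝ᵥ (P *ᵥ x) := by
  obtain ⟨c, hc, hc_le⟩ := hΔQ.exists_pos_mul_norm_sq_le
  have hlin : (fun x => g x - A *ᵥ x) =o[𝓝 0] fun x => x := by
    simpa only [hg0, sub_zero, LinearMap.coe_toContinuousLinearMap', mulVecLin_apply]
      using hg.isLittleO
  have hg_O : g =O[𝓝 0] fun x => x := by
    simpa only [hg0, sub_zero] using hg.isBigO_sub
  have hA_O : (fun x => A *ᵥ x) =O[𝓝 0] fun x => x :=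
    (LinearMap.toContinuousLinearMap A.mulVecLin).isBigO_id _
  have hbil := isBoundedBilinearMap_dotProduct_mulVec P
  have hrem : (fun x => g x ⬝ᵥ (P *ᵥ g x) - (A *ᵥ x) ⬝ᵥ (P *ᵥ (A *ᵥ x))) =o[𝓝 0]
      fun x => ‖x‖ * ‖x‖ := by
    simp only [dotProduct_mulVec_self_sub_self]
    exact (hbil.isBigO_comp.trans_isLittleO (hlin.norm_norm.mul_isBigO hg_O.norm_norm)).add
      (hbil.isBigO_comp.trans_isLittleO (hA_O.norm_norm.mul_isLittleO hlin.norm_norm))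
  have hAPA : Aᵀ * P * A = P - (R + ΔQ) := by rw [sub_eq_add_neg, ← hLyap]; abel
  have hAx : ∀ x, (A *ᵥ x) ⬝ᵥ (P *ᵥ (A *ᵥ x))
      = x ⬝ᵥ (P *ᵥ x) - x ⬝ᵥ (R *ᵥ x) - x ⬝ᵥ (ΔQ *ᵥ x) := fun x => by
    rw [← dotProduct_transpose_mul_mul_mulVec, hAPA]
    simp only [sub_mulVec, add_mulVec, dotProduct_sub, dotProduct_add]
    ring
  filter_upwards [hrem.bound hc] with x hx
  rw [Real.norm_eq_abs, norm_mul, norm_norm] at hx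
  linarith [hAx x, hc_le x, le_abs_self (g x ⬝ᵥ (P *ᵥ g x) - (A *ᵥ x) ⬝ᵥ (P *ᵥ (A *ᵥ x)))]

theorem summable_and_tsum_le_of_add_le {V s : ℕ → ℝ} (hV : ∀ k, 0 ≤ V k) (hs : ∀ k, 0 ≤ s k)
    (hdec : ∀ k, V (k + 1) + s k ≤ V k) : Summable s ∧ ∑' k, s k ≤ V 0 := by
  have hpartial : ∀ N, ∑ k ∈ Finset.range N, s k + V N ≤ V 0 := by
    intro N
    induction N with
    | zero => simp
    | succ N ih => rw [Finset.sum_range_succ]; linarith [hdec N]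
  have hbound : ∀ N, ∑ k ∈ Finset.range N, s k ≤ V 0 := fun N => by
    linarith [hpartial N, hV N]
  exact ⟨summable_of_sum_range_le hs hbound, Real.tsum_le_of_sum_range_le hs hbound⟩

theorem summable_and_tsum_le_of_sublevel_decrease {X : Type*} {g : X → X} {V S : X → ℝ}
    {α : ℝ}
    (hV : ∀ x, 0 ≤ V x) (hS : ∀ x, 0 ≤ S x) (hdec : ∀ x, V x ≤ α → V (g x) + S x ≤ V x)
    {x : ℕ → X} (hx : ∀ k, x (k + 1) = g (x k)) (hx0 : V (x 0) ≤ α) :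
    Summable (fun k => S (x k)) ∧ ∑' k, S (x k) ≤ V (x 0) := by
  have hsub : ∀ k, V (x k) ≤ α := by
    intro k
    induction k with
    | zero => exact hx0
    | succ k ih => rw [hx]; linarith [hdec _ ih, hS (x k)]
  exact summable_and_tsum_le_of_add_le (fun k => hV _) (fun k => hS _)
    fun k => hx k ▸ hdec _ (hsub k)

/-- Lemma 1 (arbitrary controller based approach): for a twice continuously differentiable
system `F` with equilibrium at the origin, input constraint set `U` with `0` in its interior,
and terminal penalty `P` solving `ΦLᵀ P ΦL - P = -(Wx + Lᵀ Wu L + ΔQ)` where `ΦL = Φ - ΓL`,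
there exists `α > 0` such that on `Ω = {x | xᵀ P x ≤ α}`: the feedback `-Lx` is admissible,
`Ω` is invariant for the closed loop `x(k+1) = F(x(k), -L x(k))`, and the infinite-horizon
closed-loop stage cost is bounded by `x(0)ᵀ P x(0)`. -/
theorem lemma1_arbitrary_controller (nx nu : ℕ)
    (F : (Fin nx → ℝ) × (Fin nu → ℝ) → (Fin nx → ℝ))
    (hF : ContDiff ℝ 2 F) (hF0 : F (0, 0) = 0)
    (U : Set (Fin nu → ℝ)) (hU : (0 : Fin nu → ℝ) ∈ interior U)
    (Wx ΔQ : Matrix (Fin nx) (Fin nx) ℝ) (hWx : Wx.PosDef) (hΔQ : ΔQ.PosDef)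
    (Wu : Matrix (Fin nu) (Fin nu) ℝ) (hWu : Wu.PosDef)
    (L : Matrix (Fin nu) (Fin nx) ℝ)
    (Φ : Matrix (Fin nx) (Fin nx) ℝ) (Γ : Matrix (Fin nx) (Fin nu) ℝ)
    (hΦΓ : ∀ p : (Fin nx → ℝ) × (Fin nu → ℝ),
      fderiv ℝ F (0, 0) p = Φ *ᵥ p.1 + Γ *ᵥ p.2)
    (P : Matrix (Fin nx) (Fin nx) ℝ) (hP : P.PosDef)
    (hLyap : (Φ - Γ * L)ᵀ * P * (Φ - Γ * L) - P = -(Wx + Lᵀ * Wu * L + ΔQ)) :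
    ∃ α > (0 : ℝ),
      (∀ x : Fin nx → ℝ, x ⬝ᵥ (P *ᵥ x) ≤ α → -(L *ᵥ x) ∈ U) ∧
      (∀ x : Fin nx → ℝ, x ⬝ᵥ (P *ᵥ x) ≤ α →
        (F (x, -(L *ᵥ x))) ⬝ᵥ (P *ᵥ F (x, -(L *ᵥ x))) ≤ α) ∧
      ∀ x : ℕ → Fin nx → ℝ, (∀ k, x (k + 1) = F (x k, -(L *ᵥ x k))) →
        (x 0) ⬝ᵥ (P *ᵥ x 0) ≤ α →
        Summable (fun k => (x k) ⬝ᵥ (Wx *ᵥ x k) + (L *ᵥ x k) ⬝ᵥ (Wu *ᵥ (L *ᵥ x k))) ∧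
        ∑' k, ((x k) ⬝ᵥ (Wx *ᵥ x k) + (L *ᵥ x k) ⬝ᵥ (Wu *ᵥ (L *ᵥ x k)))
        ≤ (x 0) ⬝ᵥ (P *ᵥ x 0) := by
  set g : (Fin nx → ℝ) → Fin nx → ℝ := fun x => F (x, -(L *ᵥ x))
  set S : (Fin nx → ℝ) → ℝ := fun x => x ⬝ᵥ (Wx *ᵥ x) + (L *ᵥ x) ⬝ᵥ (Wu *ᵥ (L *ᵥ x))
  have hS : ∀ x, 0 ≤ S x := fun x =>
    add_nonneg (hWx.posSemidef.dotProduct_mulVec_self_nonneg x)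
      (hWu.posSemidef.dotProduct_mulVec_self_nonneg _)
  have hSR : ∀ x, x ⬝ᵥ ((Wx + Lᵀ * Wu * L) *ᵥ x) = S x := fun x => by
    rw [add_mulVec, dotProduct_add, dotProduct_transpose_mul_mul_mulVec]
  have hdec : ∀ᶠ x in 𝓝 0, g x ⬝ᵥ (P *ᵥ g x) + S x ≤ x ⬝ᵥ (P *ᵥ x) := by
    simpa only [hSR] using eventually_dotProduct_mulVec_map_add_le
      (hasFDerivAt_feedback_zero L (hF.differentiable (by norm_num) _) hΦΓ)
      (by simpa [g] using hF0) hΔQ hLyap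
  have hadm : ∀ᶠ x in 𝓝 (0 : Fin nx → ℝ), -(L *ᵥ x) ∈ U :=
    (LinearMap.toContinuousLinearMap L.mulVecLin).continuous.neg.tendsto' 0 0 (by simp)
      |>.eventually (mem_interior_iff_mem_nhds.mp hU)
  obtain ⟨α, hα, hΩ⟩ := hP.exists_sublevel_subset (hdec.and hadm)
  have hdecΩ : ∀ x, x ⬝ᵥ (P *ᵥ x) ≤ α → g x ⬝ᵥ (P *ᵥ g x) + S x ≤ x ⬝ᵥ (P *ᵥ x) :=
    fun x hx => (hΩ x hx).1
  exact ⟨α, hα, fun x hx => (hΩ x hx).2, fun x hx => by linarith [hdecΩ x hx, hS x],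
    fun x hx hx0 => summable_and_tsum_le_of_sublevel_decrease
      hP.posSemidef.dotProduct_mulVec_self_nonneg hS hdecΩ hx hx0⟩
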